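/- arXiv:2008.00632 — 4 statements merged into one kernel-verified Lean document; each statement's English description precedes it below -/
import Mathlib

section
/- Suppose φ: A → B is an isomorphism of vertex algebras, and define module maps τ: A → B and σ̂: B → A inductively by τ(1) = â, σ̂(1) = a, τ(ν_k μ) = (-1)^{|ν|} φ(ν)_k τ(μ), σ̂(η_k ξ) = (-1)^{|η|} φ^{-1}(η)_k σ̂(ξ), where a, â are fixed odd elements satisfying σ̂(â) = σ̂(â₍₀₎ 1) = -(φ^{-1}(â))₍₀₎ σ̂(1) = -1. Then σ̂ ∘ τ = -Id on A, i.e., T-duality applied twice is minus the identity at the chiral level. -/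
/-!
Chiral T-duality applied twice is minus the identity.  `A = Ω^{ch,H}(Z)` and
`B = A^{ch,Ĥ}(Ẑ)` are modules over themselves, with mode actions `μA ν k : A →+ A`
(`μ ↦ ν_k μ`) and `μB η k : B →+ B`.  `φ` is the vertex algebra isomorphism `φ^ch`
with inverse `ψ = ψ̂^ch`; `ε ν = (-1)^{|ν|}` is the parity sign (so `ε ν * ε ν = 1`),
preserved by `φ` (`εB (φ ν) = ε ν`).  The module maps `τ = τ^ch`, `σ = σ̂^ch` are
defined inductively by `τ(1) = Â`, `τ(ν_k μ) = (-1)^{|ν|} (φ ν)_k τ(μ)`, and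
`σ(η_k ξ) = (-1)^{|η|} (ψ η)_k σ(ξ)` with the base computation `σ(Â) = -1`.
Since `A` is generated from the vacuum by the mode actions, `σ ∘ τ = -Id` on `A`.
-/
theorem chiral_t_duality_twice_is_minus_id
    (A B : Type*) [AddCommGroup A] [AddCommGroup B]
    (vacA : A) (Ahat : B)
    (μA : A → ℤ → A →+ A) (μB : B → ℤ → B →+ B)
    (φ : A → B) (ψ : B → A) (hψφ : ∀ ν : A, ψ (φ ν) = ν)
    (ε : A → ℤ) (hε : ∀ ν : A, ε ν * ε ν = 1)
    (εB : B → ℤ) (hεφ : ∀ ν : A, εB (φ ν) = ε ν)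
    (τ : A →+ B) (σ : B →+ A)
    (hτ1 : τ vacA = Ahat)
    (hτ : ∀ (ν : A) (k : ℤ) (μ : A), τ (μA ν k μ) = ε ν • μB (φ ν) k (τ μ))
    (hσ : ∀ (η : B) (k : ℤ) (ξ : B), σ (μB η k ξ) = εB η • μA (ψ η) k (σ ξ))
    (hσA : σ Ahat = -vacA)
    (hgen : ∀ P : A → Prop, P vacA →
      (∀ (ν : A) (k : ℤ) (μ : A), P μ → P (μA ν k μ)) → ∀ μ : A, P μ) :
    ∀ μ : A, σ (τ μ) = -μ := by
  refine hgen _ (by rw [hτ1, hσA]) ?_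
  intro ν k μ ih
  rw [hτ, map_zsmul, hσ, hεφ, hψφ, smul_smul, hε, one_smul, ih, map_neg]
end

section
/- In the twisted chiral de Rham complex Ω^{ch,H}, the differential D acts on generators by D(f) = df, D(ω) = dω, D(ι_X) = L_X - ι_X H, D(L_X) = L_X H, and D² = 0 on these generators follows from dH = 0 and the Cartan formula; in particular D²(ι_X) = D(L_X) - D(ι_X H) = 0. -/
/-!
In the twisted chiral de Rham complex `Ω^{ch,H}`, the differential `D` acts on the
generators by `D(f) = df`, `D(ω) = dω`, `D(ι_X) = L_X - ι_X H`, `D(L_X) = Lie_X H`,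
and `D² = 0` on the generators follows from `dH = 0` and the Cartan formula
`Lie_X = d ι_X + ι_X d`.  Abstract setup: `Ω` is the space of differential forms with
de Rham differential `d`, contractions `cι X` and Lie derivatives `Lie X` (Cartan
calculus), `H` a closed 3-form, `e : Ω → V` the embedding of forms into the chiral
complex, `ιV X`, `LV X` the chiral contraction/Lie-derivative fields, and `D` additive.
-/
theorem twisted_cdr_differential_squares_to_zero_on_generators
    (g : Type*) (Ω : Type*) [AddCommGroup Ω] (V : Type*) [AddCommGroup V]
    (d : Ω →+ Ω) (cι Lie : g → Ω →+ Ω) (H : Ω)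
    (hd2 : ∀ ω : Ω, d (d ω) = 0)
    (hCartan : ∀ (X : g) (ω : Ω), Lie X ω = d (cι X ω) + cι X (d ω))
    (hdLie : ∀ (X : g) (ω : Ω), d (Lie X ω) = Lie X (d ω))
    (hdH : d H = 0)
    (e : Ω →+ V) (ιV LV : g → V) (D : V →+ V)
    (hDe : ∀ ω : Ω, D (e ω) = e (d ω))
    (hDι : ∀ X : g, D (ιV X) = LV X - e (cι X H))
    (hDL : ∀ X : g, D (LV X) = e (Lie X H)) :
    (∀ ω : Ω, D (D (e ω)) = 0) ∧
    (∀ X : g, D (D (ιV X)) = 0) ∧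
    (∀ X : g, D (D (LV X)) = 0) := by
  refine ⟨fun ω => by rw [hDe, hDe, hd2, map_zero], fun X => ?_, fun X => ?_⟩
  · rw [hDι, map_sub, hDL, hDe, hCartan X H, hdH, map_zero, add_zero, sub_self]
  · rw [hDL, hDe, hdLie, hdH, map_zero, map_zero]
end

section
/- Let Ẑ → M be a circle bundle with connection Â, dual vector field v̂, line bundle L over M with connection, and let Ĥ be an invariant closed 3-form. For a section of Ω^k̄(Ẑ, π̂*(L^⊗n)) written locally as λ₀·s^n + Â ∧ λ₁·s^n with λ₀, λ₁ basic forms and s a covariantly constant local frame, the exotic differential ∇^{L^⊗n} - n ι_{v̂} + Ĥ∧ squares to zero, using F(∇^{L^⊗n}) = n·F, ι_{v̂}Â = 1, dÂ = Ĥ² (curvature relations from T-duality), and dĤ = 0. -/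
/-!
The exotic differential of Han–Mathai squares to zero.  `Ω` is the algebra of
(invariant) differential forms on the T-dual circle bundle `Ẑ`, with de Rham
differential `d` and contraction `ι = ι_{v̂}` along the dual circle direction.
In a covariantly constant local frame `s` of `L^⊗n`, the exotic differential
`∇^{L^⊗n} - n ι_{v̂} + Ĥ∧` becomes `x ↦ dx + n (a ∧ x) - n ι x + Ĥ ∧ x`, where
`a = A_{bas}` is the basic part of the connection of the T-dual bundle, with
curvature relation `da = F` (`F = Ĥ² = F_A`), `ι Ĥ = F` (from `Ĥ = Ĥ³ + Â ∧ Ĥ²`,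
`ι_{v̂} Â = 1`), and `dĤ = 0`.  The hypotheses below encode the graded Leibniz rules
specialized to the odd forms `a`, `Ĥ`, the Cartan identity `dι + ιd = Lie_{v̂} = 0`
on invariant forms, `a ∧ a = 0 = Ĥ ∧ Ĥ`, `a ∧ Ĥ + Ĥ ∧ a = 0`, and `ι² = 0`.
-/

/-- The exotic differential `∇^{L^⊗n} - n ι_{v̂} + Ĥ∧` in a covariantly constant frame. -/
def exoticD {Ω : Type*} [Ring Ω] (d ι : Ω →+ Ω) (a Hh : Ω) (n : ℤ) (x : Ω) : Ω :=
  d x + n • (a * x) - n • ι x + Hh * x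

theorem exotic_differential_squares_to_zero
    (Ω : Type*) [Ring Ω]
    (d ι : Ω →+ Ω) (a Hh F : Ω) (n : ℤ)
    (hd2 : ∀ x : Ω, d (d x) = 0)
    (hda : ∀ x : Ω, d (a * x) = F * x - a * d x)          -- `da = F`, `a` odd
    (hdH : ∀ x : Ω, d (Hh * x) = - (Hh * d x))            -- `dĤ = 0`, `Ĥ` odd
    (hCartan : ∀ x : Ω, d (ι x) + ι (d x) = 0)            -- `Lie_{v̂} = 0` on invariants
    (haa : ∀ x : Ω, a * (a * x) = 0)                      -- `a ∧ a = 0`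
    (haH : ∀ x : Ω, a * (Hh * x) + Hh * (a * x) = 0)      -- odd forms anticommute
    (hιa : ∀ x : Ω, ι (a * x) = - (a * ι x))              -- `ι a = 0`, `a` odd
    (hHH : ∀ x : Ω, Hh * (Hh * x) = 0)                    -- `Ĥ ∧ Ĥ = 0`
    (hιH : ∀ x : Ω, ι (Hh * x) = F * x - Hh * ι x)        -- `ι Ĥ = Ĥ² = F`
    (hιι : ∀ x : Ω, ι (ι x) = 0) :
    ∀ x : Ω, exoticD d ι a Hh n (exoticD d ι a Hh n x) = 0 := by
  intro x
  have hdι : ∀ y : Ω, d (ι y) = - ι (d y) := fun y =>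
    eq_neg_of_add_eq_zero_left (hCartan y)
  have hHa : ∀ y : Ω, Hh * (a * y) = - (a * (Hh * y)) := fun y =>
    eq_neg_of_add_eq_zero_right (haH y)
  simp only [exoticD, map_add, map_sub, map_zsmul, mul_add, mul_sub, smul_add, smul_sub,
    hd2, hda, hdH, hHa, haa, hιa, hHH, hιH, hιι, hdι, mul_smul_comm, smul_neg, mul_neg,
    map_neg, neg_neg, smul_smul, smul_zero]
  abel
end

section
/- The T-duality map τ^ch: Ω^{ch,H,k̄}(Z) → A^{ch,Ĥ,k+1 mod 2}(Ẑ), defined inductively by τ^ch(1) = Â and τ^ch(ν_k μ) = (-1)^{|ν|} (φ^ch(ν))_k(τ^ch(μ)), shifts the ℤ/2-degree by one and preserves the weight filtration: τ^ch(Ω^{ch,H,k̄}(Z)_{[i]}) ⊆ A^{ch,Ĥ,k+1}(Ẑ)_{[i]}; moreover on the weight-zero subspace it coincides with the classical Han–Mathai T-duality map τ (in particular τ^ch(A) = -1 and τ^ch(ω) = :ω Â: for basic 1-forms ω). -/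
/-!
The chiral T-duality map `τ^ch : Ω^{ch,H,k̄}(Z) → A^{ch,Ĥ,k+1}(Ẑ)` shifts the ℤ/2
degree by one and preserves the weight filtration, and coincides with the classical
Han–Mathai map on the weight-zero subspace.  Abstract setup: `A` is the twisted chiral
de Rham complex, generated as a module over itself from the vacuum `vacA` by the mode
actions `actA ν k` of the weight-homogeneous generators `ν ∈ genA` (with the shifted
mode convention, `ν_k` lowers the weight filtration `WtA` by `k` and adds the parity
`degg ν` to the ℤ/2 degree `DegA`); `B` is the exotic complex with mode actions
`actB`, weight filtration `WtB` and degree `DegB`; `φ` is the (degree preserving)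
chiral T-duality vertex algebra isomorphism and `sgn ν = (-1)^{|ν|}`.  The map
`τ : A → B` satisfies `τ(1) = Â` and `τ(ν_k μ) = (-1)^{|ν|} (φ ν)_k τ(μ)`, where `Â`
has weight 0 and degree `1̄`.  Conclusions: `τ` preserves the weight filtration,
shifts degree by `1̄`, and `τ(A) = -1` (computed from `A = A₀(1)`, `φ(A) = ι_Â`, the
OPE `(ι_Â)₀ Â = 1`, and `A` odd), while for even generators `ω`,
`τ(:ω 1:) = :(φ ω) Â:` — the classical Hori/Han–Mathai formula at weight zero.
-/
theorem chiral_t_duality_degree_shift_and_weight_filtration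
    (A B : Type*) [AddCommGroup A] [AddCommGroup B]
    (genA : Set A) (actA : A → ℤ → A → A) (actB : B → ℤ → B → B)
    (vacA : A) (vacB Ahat : B) (φ : A → B) (sgn : A → ℤ) (degg : A → ZMod 2)
    (WtA : ℤ → A → Prop) (WtB : ℤ → B → Prop)
    (DegA : ZMod 2 → A → Prop) (DegB : ZMod 2 → B → Prop)
    (τ : A → B)
    -- the inductive definition of `τ^ch`
    (hτ1 : τ vacA = Ahat)
    (hτrec : ∀ ν ∈ genA, ∀ (k : ℤ) (μ : A), τ (actA ν k μ) = sgn ν • actB (φ ν) k (τ μ))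
    -- `Â` has weight zero and odd degree
    (hAhatWt : WtB 0 Ahat) (hAhatDeg : DegB 1 Ahat)
    -- elimination principles for the weight filtration and degree grading of `A`:
    -- `A` is generated from the vacuum (weight 0, degree 0̄) by the modes of generators
    (hWtArec : ∀ P : ℤ → A → Prop,
      (∀ i : ℤ, 0 ≤ i → P i vacA) →
      (∀ ν ∈ genA, ∀ (k : ℤ) (μ : A) (i : ℤ), P i μ → P (i - k) (actA ν k μ)) →
      (∀ (i j : ℤ) (μ : A), P i μ → i ≤ j → P j μ) →
      ∀ (i : ℤ) (μ : A), WtA i μ → P i μ)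
    (hDegArec : ∀ P : ZMod 2 → A → Prop,
      P 0 vacA →
      (∀ ν ∈ genA, ∀ (k : ℤ) (μ : A) (d : ZMod 2), P d μ → P (d + degg ν) (actA ν k μ)) →
      ∀ (d : ZMod 2) (μ : A), DegA d μ → P d μ)
    -- compatibility of the filtration and grading of `B` with the transported modes
    (hWtB : ∀ ν ∈ genA, ∀ (k : ℤ) (ξ : B) (i : ℤ), WtB i ξ → WtB (i - k) (actB (φ ν) k ξ))
    (hWtBmono : ∀ (i j : ℤ) (ξ : B), WtB i ξ → i ≤ j → WtB j ξ)
    (hWtBsmul : ∀ (z : ℤ) (i : ℤ) (ξ : B), WtB i ξ → WtB i (z • ξ))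
    (hDegB : ∀ ν ∈ genA, ∀ (k : ℤ) (ξ : B) (d : ZMod 2),
      DegB d ξ → DegB (d + degg ν) (actB (φ ν) k ξ))
    (hDegBsmul : ∀ (z : ℤ) (d : ZMod 2) (ξ : B), DegB d ξ → DegB d (z • ξ))
    -- data for the weight-zero comparison: the connection form `conA` is an odd
    -- generator with `A = A₀(1)`, `φ(conA) = ι_Â`, and `(ι_Â)₀ Â = 1`
    (conA : A) (hconA : conA ∈ genA) (hconAact : actA conA 0 vacA = conA)
    (hsgnconA : sgn conA = -1)
    (hιAhat : actB (φ conA) 0 Ahat = vacB) :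
    -- `τ` preserves the weight filtration
    (∀ (i : ℤ) (μ : A), WtA i μ → WtB i (τ μ)) ∧
    -- `τ` shifts the ℤ/2 degree by one
    (∀ (d : ZMod 2) (μ : A), DegA d μ → DegB (d + 1) (τ μ)) ∧
    -- on weight zero, `τ` is the classical Han–Mathai map: `τ(A) = -1` ...
    τ conA = -vacB ∧
    -- ... and `τ(ω_{(-1)} 1) = (φ ω)_{(-1)} Â`, i.e. `τ(ω) = :ω Â:` for even generators
    (∀ ω ∈ genA, sgn ω = 1 → τ (actA ω (-1) vacA) = actB (φ ω) (-1) Ahat) := by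
  refine ⟨?_, ?_, ?_, ?_⟩
  · refine hWtArec (fun i μ => WtB i (τ μ)) ?_ ?_ ?_
    · intro i hi
      rw [hτ1]
      exact hWtBmono 0 i Ahat hAhatWt hi
    · intro ν hν k μ i hμ
      rw [hτrec ν hν k μ]
      exact hWtBsmul _ _ _ (hWtB ν hν k _ i hμ)
    · intro i j μ h hij
      exact hWtBmono i j _ h hij
  · refine hDegArec (fun d μ => DegB (d + 1) (τ μ)) ?_ ?_
    · show DegB (0 + 1) (τ vacA)
      rw [hτ1, zero_add]; exact hAhatDeg
    · intro ν hν k μ d hμ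
      show DegB (d + degg ν + 1) (τ (actA ν k μ))
      rw [hτrec ν hν k μ, add_right_comm]
      exact hDegBsmul _ _ _ (hDegB ν hν k _ (d + 1) hμ)
  · rw [← hconAact, hτrec conA hconA 0 vacA, hτ1, hιAhat, hsgnconA]
    simp
  · intro ω hω hsω
    rw [hτrec ω hω (-1) vacA, hτ1, hsω, one_smul]
end
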